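/- arXiv:2202.11691 — 3 statements merged into one kernel-verified Lean document; each statement's English description precedes it below -/
import Mathlib

section
/- Consider two disks of equal radius r centered at points A and B with distance d = ‖AB‖ ≤ r. Let β = 2·arccos(d/(2r)). Then the area S of the region inside exactly one of the two disks minus a half-disk and a lens correction, namely S = (π r²)/2 + d·√(r² − (d/2)²) − d·√(r² − d²) − (r² β)/2, satisfies S ≥ (1/2)·r·d. -/
/-!
With `x = d / (2r)`, the identity `π / 2 - arccos x = arcsin x` gives
`S = r² arcsin x + d (√(r² - (d/2)²) - √(r² - d²))`. The second summand is nonnegative, and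
`arcsin x ≥ x` on `[0, 1]` because `sin t ≤ t` for `t ≥ 0`; hence `S ≥ r² x = r d / 2`.
-/

open Real

theorem Real.self_le_arcsin {x : ℝ} (hx₀ : 0 ≤ x) (hx₁ : x ≤ 1) : x ≤ arcsin x :=
  calc x = sin (arcsin x) := (sin_arcsin (by linarith) hx₁).symm
    _ ≤ arcsin x := sin_le (arcsin_nonneg.2 hx₀)

theorem mul_div_two_le_sq_mul_arcsin {r d : ℝ} (hr : 0 < r) (hd : 0 ≤ d) (hdr : d ≤ 2 * r) :
    r * d / 2 ≤ r ^ 2 * arcsin (d / (2 * r)) :=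
  calc r * d / 2 = r ^ 2 * (d / (2 * r)) := by field_simp
    _ ≤ r ^ 2 * arcsin (d / (2 * r)) := by
      gcongr
      exact self_le_arcsin (by positivity) ((div_le_one (by positivity)).2 hdr)

/-- For two disks of equal radius r at center distance d with 0 < d ≤ r,
the area S = (π r²)/2 + d·√(r² − (d/2)²) − d·√(r² − d²) − (r² β)/2, with
β = 2·arccos(d/(2r)), satisfies S ≥ (1/2)·r·d. -/
theorem stmt_2 (r d : ℝ) (hd : 0 < d) (hdr : d ≤ r) :
    let β := 2 * Real.arccos (d / (2 * r))
    let S := π * r ^ 2 / 2 + d * Real.sqrt (r ^ 2 - (d / 2) ^ 2)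
      - d * Real.sqrt (r ^ 2 - d ^ 2) - r ^ 2 * β / 2
    (1 / 2) * r * d ≤ S := by
  intro β S
  have hS : S = r ^ 2 * arcsin (d / (2 * r))
      + d * (√(r ^ 2 - (d / 2) ^ 2) - √(r ^ 2 - d ^ 2)) := by
    simp only [S, β, arccos_eq_pi_div_two_sub_arcsin]
    ring
  have hsqrt : √(r ^ 2 - d ^ 2) ≤ √(r ^ 2 - (d / 2) ^ 2) := sqrt_le_sqrt (by nlinarith)
  have harcsin := mul_div_two_le_sq_mul_arcsin (hd.trans_le hdr) hd.le (by linarith)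
  rw [hS]
  linarith [mul_nonneg hd.le (sub_nonneg.2 hsqrt)]
end

section
/- Let k ≥ 1 be an integer, ξ ∈ ℝ, and for each n let r_n = √((log n + (2k−1)·log log n + ξ)/(π n)). Then n·∫₀^{r_n/2} (n·a(r_n,t))^k · exp(−n·a(r_n,t))/k! dt → (√π / (2^{k+1} k!))·e^{−ξ/2} as n → ∞, where a(r,t) is the area of {x₁²+x₂² ≤ r², x₁ ≤ t}. -/
/-!
For `0 ≤ t ≤ r` the segment area is `π r² / 2` plus the strip area `∫₀ᵗ 2√(r² - x²) dx`.
Since `n π r_n² / 2 = L_n / 2` with `L_n = log n + (2k-1) log log n + ξ`, the substitution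
`u = 2 n r_n t` factors the integral as `(1 / 2r_n) · (L_n/2)^k e^{-L_n/2} / k!` times
`∫₀^{n r_n²} (1 + 2φ_n(u)/L_n)^k e^{-φ_n(u)} du`, where `φ_n(u) = stripProfile n r_n u` is `n`
times the strip area up to `u / (2 n r_n)`. On the range of integration `u/2 ≤ φ_n(u) ≤ u`, and
`φ_n(u) → u`, so by dominated convergence (majorant `e^{-u/4}`) the integral tends to
`∫₀^∞ e^{-u} du = 1`. The prefactor is exactly the claimed constant times
`(L_n / log n)^{k - 1/2}`, which tends to `1`.
-/

open Real MeasureTheory Filter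

/-- The area a(r,t) of the portion of the disk of radius r centered at the origin
lying in the half-plane {x₁ ≤ t}. -/
noncomputable def segArea (r t : ℝ) : ℝ :=
  (volume {p : ℝ × ℝ | p.1 ^ 2 + p.2 ^ 2 ≤ r ^ 2 ∧ p.1 ≤ t}).toReal

open Set Topology
open scoped Nat

noncomputable def stripArea (r t : ℝ) : ℝ := ∫ x in (0 : ℝ)..t, 2 * √(r ^ 2 - x ^ 2)

lemma continuous_two_mul_sqrt_sq_sub_sq (r : ℝ) : Continuous fun x : ℝ => 2 * √(r ^ 2 - x ^ 2) := by
  fun_prop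

lemma volume_setOf_sq_add_sq_le (r x : ℝ) :
    volume {y : ℝ | x ^ 2 + y ^ 2 ≤ r ^ 2} = ENNReal.ofReal (2 * √(r ^ 2 - x ^ 2)) := by
  rcases le_or_gt (x ^ 2) (r ^ 2) with hx | hx
  · have : {y : ℝ | x ^ 2 + y ^ 2 ≤ r ^ 2} = Icc (-√(r ^ 2 - x ^ 2)) √(r ^ 2 - x ^ 2) := by
      ext y
      show x ^ 2 + y ^ 2 ≤ r ^ 2 ↔ y ∈ Icc _ _
      rw [mem_Icc, ← Real.sq_le (sub_nonneg.2 hx)]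
      constructor <;> intro h <;> linarith
    rw [this, Real.volume_Icc]
    ring_nf
  · have : {y : ℝ | x ^ 2 + y ^ 2 ≤ r ^ 2} = ∅ :=
      eq_empty_of_forall_notMem fun y (hy : x ^ 2 + y ^ 2 ≤ r ^ 2) => by nlinarith [sq_nonneg y]
    rw [this, Real.sqrt_eq_zero'.2 (by linarith), measure_empty, mul_zero, ENNReal.ofReal_zero]

lemma segArea_eq_intervalIntegral {r t : ℝ} (hr : 0 ≤ r) (ht : -r ≤ t) :
    segArea r t = ∫ x in (-r)..t, 2 * √(r ^ 2 - x ^ 2) := by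
  set S := {p : ℝ × ℝ | p.1 ^ 2 + p.2 ^ 2 ≤ r ^ 2 ∧ p.1 ≤ t}
  have hS : MeasurableSet S :=
    (measurableSet_le (f := fun p : ℝ × ℝ => p.1 ^ 2 + p.2 ^ 2) (by fun_prop)
      measurable_const).inter
      (measurableSet_le measurable_fst measurable_const)
  have hslice (x : ℝ) : volume (Prod.mk x ⁻¹' S) =
      (Icc (-r) t).indicator (fun x => ENNReal.ofReal (2 * √(r ^ 2 - x ^ 2))) x := by
    by_cases hxt : x ≤ t
    · have : Prod.mk x ⁻¹' S = {y : ℝ | x ^ 2 + y ^ 2 ≤ r ^ 2} := by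
        ext y; simp [S, hxt]
      rw [this, volume_setOf_sq_add_sq_le]
      by_cases hxr : -r ≤ x
      · rw [indicator_of_mem (show x ∈ Icc (-r) t from ⟨hxr, hxt⟩)]
      · rw [indicator_of_notMem (fun h => hxr h.1),
          Real.sqrt_eq_zero'.2 (by nlinarith), mul_zero, ENNReal.ofReal_zero]
    · have : Prod.mk x ⁻¹' S = ∅ := by
        ext y; simp [S, hxt]
      rw [this, measure_empty, indicator_of_notMem (fun h => hxt h.2)]
  have hvol : volume S = ∫⁻ x in Icc (-r) t, ENNReal.ofReal (2 * √(r ^ 2 - x ^ 2)) := by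
    rw [Measure.volume_eq_prod, Measure.prod_apply hS]
    simp_rw [hslice]
    exact lintegral_indicator measurableSet_Icc _
  rw [segArea, hvol, ← integral_eq_lintegral_of_nonneg_ae
      (Eventually.of_forall fun x => by positivity)
      (continuous_two_mul_sqrt_sq_sub_sq r).aestronglyMeasurable,
    intervalIntegral.integral_of_le ht, integral_Icc_eq_integral_Ioc]

lemma integral_sqrt_one_sub_sq_neg_one_zero : ∫ x in (-1 : ℝ)..0, √(1 - x ^ 2) = π / 4 := by
  have hsymm : ∫ x in (0 : ℝ)..1, √(1 - x ^ 2) = ∫ x in (-1 : ℝ)..0, √(1 - x ^ 2) := by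
    have := intervalIntegral.integral_comp_neg (a := (0 : ℝ)) (b := 1) fun x => √(1 - x ^ 2)
    simp only [neg_sq, neg_zero] at this
    exact this
  have hcont : Continuous fun x : ℝ => √(1 - x ^ 2) := by fun_prop
  have := intervalIntegral.integral_add_adjacent_intervals
    (hcont.intervalIntegrable (μ := volume) (-1) 0) (hcont.intervalIntegrable 0 1)
  rw [integral_sqrt_one_sub_sq, ← hsymm] at this
  linarith

lemma integral_two_sqrt_sq_sub_sq_neg_zero {r : ℝ} (hr : 0 ≤ r) :
    ∫ x in (-r)..0, 2 * √(r ^ 2 - x ^ 2) = π * r ^ 2 / 2 := by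
  rcases hr.eq_or_lt with rfl | hr
  · simp
  have hscale (y : ℝ) : 2 * √(r ^ 2 - (r * y) ^ 2) = 2 * r * √(1 - y ^ 2) := by
    rw [show r ^ 2 - (r * y) ^ 2 = r ^ 2 * (1 - y ^ 2) by ring,
      Real.sqrt_mul (sq_nonneg r), Real.sqrt_sq hr.le, mul_assoc]
  have hunit : ∫ y in (-1 : ℝ)..0, 2 * √(r ^ 2 - (r * y) ^ 2) = 2 * r * (π / 4) := by
    simp_rw [hscale]
    rw [intervalIntegral.integral_const_mul, integral_sqrt_one_sub_sq_neg_one_zero]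
  have := intervalIntegral.integral_comp_mul_left (a := -1) (b := 0)
    (fun x => 2 * √(r ^ 2 - x ^ 2)) hr.ne'
  rw [hunit, mul_neg, mul_one, mul_zero, smul_eq_mul, eq_inv_mul_iff_mul_eq₀ hr.ne'] at this
  rw [← this]
  ring

lemma segArea_eq_add_stripArea {r t : ℝ} (hr : 0 ≤ r) (ht : -r ≤ t) :
    segArea r t = π * r ^ 2 / 2 + stripArea r t := by
  have hint := (continuous_two_mul_sqrt_sq_sub_sq r).intervalIntegrable (μ := volume)
  rw [segArea_eq_intervalIntegral hr ht, stripArea,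
    ← intervalIntegral.integral_add_adjacent_intervals (hint (-r) 0) (hint 0 t),
    integral_two_sqrt_sq_sub_sq_neg_zero hr]

lemma continuous_stripArea (r : ℝ) : Continuous (stripArea r) :=
  intervalIntegral.continuous_primitive (μ := volume)
    (fun _ _ => (continuous_two_mul_sqrt_sq_sub_sq r).intervalIntegrable _ _) 0

lemma two_mul_mul_sqrt_le_stripArea {r t : ℝ} (ht : 0 ≤ t) :
    2 * t * √(r ^ 2 - t ^ 2) ≤ stripArea r t := by
  have := intervalIntegral.integral_mono_on (f := fun _ => 2 * √(r ^ 2 - t ^ 2)) ht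
    (intervalIntegrable_const (μ := volume))
    ((continuous_two_mul_sqrt_sq_sub_sq r).intervalIntegrable 0 t)
    fun x hx => mul_le_mul_of_nonneg_left
      (Real.sqrt_le_sqrt (by nlinarith [hx.1, hx.2] : r ^ 2 - t ^ 2 ≤ r ^ 2 - x ^ 2)) zero_le_two
  simpa [stripArea, mul_comm, mul_assoc, mul_left_comm] using this

lemma stripArea_le {r t : ℝ} (hr : 0 ≤ r) (ht : 0 ≤ t) : stripArea r t ≤ 2 * t * r := by
  have := intervalIntegral.integral_mono_on ht
    ((continuous_two_mul_sqrt_sq_sub_sq r).intervalIntegrable 0 t)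
    (intervalIntegrable_const (μ := volume) (c := 2 * r))
    fun x _ => mul_le_mul_of_nonneg_left
      ((Real.sqrt_le_left hr).2 (by nlinarith [sq_nonneg x])) zero_le_two
  simpa [stripArea, mul_comm, mul_assoc, mul_left_comm] using this

noncomputable def stripProfile (N r u : ℝ) : ℝ := N * stripArea r (u / (2 * N * r))

lemma continuous_stripProfile (N r : ℝ) : Continuous (stripProfile N r) :=
  continuous_const.mul ((continuous_stripArea r).comp (continuous_id.div_const _))

lemma stripProfile_bounds {N r u : ℝ} (hN : 0 < N) (hr : 0 < r) (hu : 0 ≤ u) :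
    u * √(1 - (u / (2 * (N * r ^ 2))) ^ 2) ≤ stripProfile N r u ∧ stripProfile N r u ≤ u := by
  set t := u / (2 * N * r)
  have ht : 0 ≤ t := by positivity
  have hsqrt : √(r ^ 2 - t ^ 2) = r * √(1 - (u / (2 * (N * r ^ 2))) ^ 2) := by
    rw [show r ^ 2 - t ^ 2 = r ^ 2 * (1 - (u / (2 * (N * r ^ 2))) ^ 2) by simp only [t]; field_simp,
      Real.sqrt_mul (sq_nonneg r), Real.sqrt_sq hr.le]
  constructor
  · calc u * √(1 - (u / (2 * (N * r ^ 2))) ^ 2) = N * (2 * t * √(r ^ 2 - t ^ 2)) := by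
          rw [hsqrt]; simp only [t]; field_simp
      _ ≤ stripProfile N r u :=
          mul_le_mul_of_nonneg_left (two_mul_mul_sqrt_le_stripArea ht) hN.le
  · calc stripProfile N r u ≤ N * (2 * t * r) :=
          mul_le_mul_of_nonneg_left (stripArea_le hr.le ht) hN.le
      _ = u := by simp only [t]; field_simp

lemma half_le_stripProfile {N r u : ℝ} (hN : 0 < N) (hr : 0 < r) (hu₀ : 0 ≤ u)
    (hu : u ≤ N * r ^ 2) : u / 2 ≤ stripProfile N r u := by
  have hs : u / (2 * (N * r ^ 2)) ≤ 1 / 2 := by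
    rw [div_le_iff₀ (by positivity)]; linarith
  have hs₀ : 0 ≤ u / (2 * (N * r ^ 2)) := by positivity
  have : 1 / 2 ≤ √(1 - (u / (2 * (N * r ^ 2))) ^ 2) :=
    (Real.le_sqrt' one_half_pos).2 (by nlinarith)
  calc u / 2 = u * (1 / 2) := by ring
    _ ≤ u * √(1 - (u / (2 * (N * r ^ 2))) ^ 2) := mul_le_mul_of_nonneg_left this hu₀
    _ ≤ stripProfile N r u := (stripProfile_bounds hN hr hu₀).1

lemma tendsto_stripProfile {ι : Type*} {l : Filter ι} {N r : ι → ℝ} (hN : ∀ᶠ i in l, 0 < N i)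
    (hr : ∀ᶠ i in l, 0 < r i) (hB : Tendsto (fun i => N i * r i ^ 2) l atTop) {u : ℝ}
    (hu : 0 ≤ u) : Tendsto (fun i => stripProfile (N i) (r i) u) l (𝓝 u) := by
  have hlower : Tendsto (fun i => u * √(1 - (u / (2 * (N i * r i ^ 2))) ^ 2)) l (𝓝 u) := by
    have h := tendsto_const_nhds (x := u) |>.div_atTop (hB.const_mul_atTop two_pos)
    simpa using (tendsto_const_nhds (x := u)).mul
      ((tendsto_const_nhds (x := (1 : ℝ))).sub (h.pow 2)).sqrt
  refine tendsto_of_tendsto_of_tendsto_of_le_of_le' hlower tendsto_const_nhds ?_ ?_ <;>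
    filter_upwards [hN, hr] with i hNi hri
  exacts [(stripProfile_bounds hNi hri hu).1, (stripProfile_bounds hNi hri hu).2]

lemma mul_integral_segArea_eq (k : ℕ) {N r : ℝ} (hN : 0 < N) (hr : 0 < r) :
    N * ∫ t in (0 : ℝ)..r / 2, (N * segArea r t) ^ k * exp (-N * segArea r t) / k ! =
      1 / (2 * r) * ((N * π * r ^ 2 / 2) ^ k * exp (-(N * π * r ^ 2 / 2)) / k !) *
        ∫ u in (0 : ℝ)..N * r ^ 2,
          (1 + stripProfile N r u / (N * π * r ^ 2 / 2)) ^ k * exp (-stripProfile N r u) := by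
  set M := N * π * r ^ 2 / 2
  have hM : M ≠ 0 := by positivity
  have hsub := intervalIntegral.integral_comp_div (a := 0) (b := N * r ^ 2)
    (fun t => (N * segArea r t) ^ k * exp (-N * segArea r t) / k !)
    (show 2 * N * r ≠ 0 by positivity)
  rw [zero_div, show N * r ^ 2 / (2 * N * r) = r / 2 by field_simp, smul_eq_mul] at hsub
  have hfactor : ∀ u ∈ uIcc 0 (N * r ^ 2),
      (N * segArea r (u / (2 * N * r))) ^ k * exp (-N * segArea r (u / (2 * N * r))) / k ! =
        M ^ k * exp (-M) / k ! *
          ((1 + stripProfile N r u / M) ^ k * exp (-stripProfile N r u)) := by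
    intro u hu
    rw [uIcc_of_le (by positivity)] at hu
    have ht : -r ≤ u / (2 * N * r) := le_trans (neg_nonpos.2 hr.le) (by have := hu.1; positivity)
    have hsplit : N * segArea r (u / (2 * N * r)) = M + stripProfile N r u := by
      rw [segArea_eq_add_stripArea hr.le ht, stripProfile]; ring
    have hpow : (M + stripProfile N r u) ^ k = M ^ k * (1 + stripProfile N r u / M) ^ k := by
      rw [← mul_pow, mul_add, mul_one, mul_div_cancel₀ _ hM]
    rw [neg_mul, hsplit, hpow, neg_add, exp_add]
    ring
  rw [intervalIntegral.integral_congr hfactor, intervalIntegral.integral_const_mul] at hsub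
  rw [mul_assoc (1 / (2 * r)), hsub]
  field_simp

lemma one_add_div_pow_mul_exp_neg_le {k : ℕ} {M x : ℝ} (hM : 0 < M) (hkM : 2 * k ≤ M)
    (hx : 0 ≤ x) : (1 + x / M) ^ k * exp (-x) ≤ exp (-(x / 2)) := by
  have hkx : k * (x / M) ≤ x / 2 := by
    rw [← mul_div_assoc, div_le_div_iff₀ hM two_pos]; nlinarith
  calc (1 + x / M) ^ k * exp (-x) ≤ exp (x / M) ^ k * exp (-x) := by
        gcongr
        linarith [add_one_le_exp (x / M)]
    _ = exp (k * (x / M) - x) := by rw [← exp_nat_mul, ← exp_add]; ring_nf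
    _ ≤ exp (-(x / 2)) := exp_le_exp.2 (by linarith)

lemma tendsto_intervalIntegral_one_add_div_pow_mul_exp_neg {ι : Type*} {l : Filter ι}
    [l.IsCountablyGenerated] (k : ℕ) {c : ℝ} (hc : 0 < c) {ψ : ι → ℝ → ℝ} {M B : ι → ℝ}
    (hM : Tendsto M l atTop) (hB : Tendsto B l atTop) (hψ : ∀ i, Continuous (ψ i))
    (hψ_ge : ∀ᶠ i in l, ∀ u ∈ Ioc 0 (B i), c * u ≤ ψ i u)
    (hψ_lim : ∀ u > 0, Tendsto (ψ · u) l (𝓝 u)) :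
    Tendsto (fun i => ∫ u in (0 : ℝ)..B i, (1 + ψ i u / M i) ^ k * exp (-ψ i u)) l (𝓝 1) := by
  set f : ι → ℝ → ℝ := fun i u => (1 + ψ i u / M i) ^ k * exp (-ψ i u)
  set F : ι → ℝ → ℝ := fun i => (Ioc 0 (B i)).indicator (f i)
  set bound : ℝ → ℝ := (Ioi 0).indicator fun u => exp (-(c / 2) * u)
  set g : ℝ → ℝ := (Ioi 0).indicator fun u => exp (-u)
  have hg : ∫ u, g u = 1 := by
    rw [integral_indicator measurableSet_Ioi, integral_exp_neg_Ioi_zero]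
  have hbound_int : Integrable bound :=
    (exp_neg_integrableOn_Ioi 0 (half_pos hc)).integrable_indicator measurableSet_Ioi
  have hF_meas (i : ι) : AEStronglyMeasurable (F i) :=
    (Continuous.aestronglyMeasurable (by fun_prop)).indicator measurableSet_Ioc
  have hF_le : ∀ᶠ i in l, ∀ᵐ u, ‖F i u‖ ≤ bound u := by
    filter_upwards [hψ_ge, hM.eventually_gt_atTop 0, hM.eventually_ge_atTop (2 * k)]
      with i hge hM₀ hkM
    refine Eventually.of_forall fun u => ?_
    simp only [F, bound]
    by_cases hu : u ∈ Ioc 0 (B i)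
    · have hcu := hge u hu
      have hψ₀ : 0 ≤ ψ i u := le_trans (by nlinarith [hu.1]) hcu
      rw [indicator_of_mem hu, indicator_of_mem (show u ∈ Ioi 0 from hu.1),
        Real.norm_of_nonneg (by positivity)]
      refine (one_add_div_pow_mul_exp_neg_le hM₀ hkM hψ₀).trans (exp_le_exp.2 ?_)
      linarith
    · rw [indicator_of_notMem hu, norm_zero]
      exact indicator_nonneg (fun _ _ => (exp_pos _).le) u
  have hF_lim : ∀ᵐ u, Tendsto (F · u) l (𝓝 (g u)) := by
    refine Eventually.of_forall fun u => ?_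
    rcases le_or_gt u 0 with hu | hu
    · simpa [F, g, hu] using tendsto_const_nhds
    · rw [show g u = (1 + 0) ^ k * exp (-u) by simp [g, indicator_of_mem (show u ∈ Ioi 0 from hu)]]
      refine Tendsto.congr' ?_ ((tendsto_const_nhds.add ((hψ_lim u hu).div_atTop hM)).pow k |>.mul
        (((hψ_lim u hu).neg).rexp))
      filter_upwards [hB.eventually_ge_atTop u] with i hi
      exact (indicator_of_mem (show u ∈ Ioc 0 (B i) from ⟨hu, hi⟩) (f i)).symm
  have hJ := tendsto_integral_filter_of_dominated_convergence bound
    (Eventually.of_forall hF_meas) hF_le hbound_int hF_lim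
  rw [hg] at hJ
  refine hJ.congr' ?_
  filter_upwards [hB.eventually_ge_atTop 0] with i hi
  rw [integral_indicator measurableSet_Ioc, intervalIntegral.integral_of_le hi]

lemma tendsto_log_add_mul_log_log_div_log (a ξ : ℝ) :
    Tendsto (fun x => (log x + a * log (log x) + ξ) / log x) atTop (𝓝 1) := by
  have hloglog : Tendsto (fun x => log (log x) / log x) atTop (𝓝 0) :=
    isLittleO_log_id_atTop.tendsto_div_nhds_zero.comp tendsto_log_atTop
  have h := (tendsto_const_nhds (x := (1 : ℝ))).add
    ((hloglog.const_mul a).add (tendsto_const_nhds (x := ξ) |>.div_atTop tendsto_log_atTop))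
  rw [mul_zero, add_zero, add_zero] at h
  refine h.congr' ?_
  filter_upwards [tendsto_log_atTop.eventually_gt_atTop 0] with x hx
  field_simp
  ring

lemma tendsto_log_add_mul_log_log_atTop (a ξ : ℝ) :
    Tendsto (fun x => log x + a * log (log x) + ξ) atTop atTop := by
  refine (tendsto_log_atTop.atTop_mul_pos one_pos
    (tendsto_log_add_mul_log_log_div_log a ξ)).congr' ?_
  filter_upwards [tendsto_log_atTop.eventually_gt_atTop 0] with x hx
  field_simp

lemma one_div_two_mul_mul_pow_mul_exp_eq (k : ℕ) (ξ : ℝ) {x L r : ℝ} (hx : 1 < x) (hL : 0 < L)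
    (hL_eq : L = log x + (2 * k - 1) * log (log x) + ξ) (hr : r = √(L / (π * x))) :
    1 / (2 * r) * ((x * π * r ^ 2 / 2) ^ k * exp (-(x * π * r ^ 2 / 2)) / k !) =
      √π / (2 ^ (k + 1) * k !) * exp (-ξ / 2) * (L / log x) ^ ((k : ℝ) - 1 / 2) := by
  have hl : 0 < log x := log_pos hx
  have hπ := pi_pos
  have hM : x * π * r ^ 2 / 2 = L / 2 := by
    rw [hr, sq_sqrt (by positivity)]; field_simp
  rw [hM, hr]
  refine log_injOn_pos (mem_Ioi.2 (by positivity)) (mem_Ioi.2 (by positivity)) ?_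
  simp (disch := positivity) only [log_mul, log_div, log_pow, log_rpow, log_sqrt, log_exp,
    log_one]
  push_cast
  linear_combination (-1 / 2 : ℝ) * hL_eq

section Radius

variable {L r : ℕ → ℝ} (hL : Tendsto L atTop atTop) (hr : ∀ n : ℕ, r n = √(L n / (π * n)))
include hL hr

lemma eventually_radius_pos_and_mul_sq_eq :
    ∀ᶠ n : ℕ in atTop, 0 < (n : ℝ) ∧ 0 < r n ∧ (n : ℝ) * r n ^ 2 = L n / π := by
  filter_upwards [(tendsto_natCast_atTop_atTop (R := ℝ)).eventually_gt_atTop 0,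
    hL.eventually_gt_atTop 0]
    with n hn hLn
  have hπ := pi_pos
  refine ⟨hn, by rw [hr n]; positivity, ?_⟩
  rw [hr n, sq_sqrt (by positivity)]
  field_simp

lemma tendsto_mul_radius_sq : Tendsto (fun n : ℕ => (n : ℝ) * r n ^ 2) atTop atTop :=
  (hL.atTop_div_const pi_pos).congr'
    ((eventually_radius_pos_and_mul_sq_eq hL hr).mono fun _ h => h.2.2.symm)

end Radius

theorem stmt_9_general (k : ℕ) (ξ : ℝ)
    (r : ℕ → ℝ)
    (hr : ∀ n : ℕ, r n =
      Real.sqrt ((Real.log n + (2 * k - 1) * Real.log (Real.log n) + ξ) / (π * n))) :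
    Tendsto (fun n : ℕ =>
        (n : ℝ) * ∫ t in (0:ℝ)..(r n / 2),
          ((n : ℝ) * segArea (r n) t) ^ k * Real.exp (-(n : ℝ) * segArea (r n) t)
            / (Nat.factorial k))
      atTop (nhds (Real.sqrt π / (2 ^ (k + 1) * Nat.factorial k) * Real.exp (-ξ / 2))) := by
  set L : ℕ → ℝ := fun n => log n + (2 * k - 1) * log (log n) + ξ
  have hL_div : Tendsto (fun n => L n / log n) atTop (𝓝 1) :=
    (tendsto_log_add_mul_log_log_div_log (2 * k - 1) ξ).comp tendsto_natCast_atTop_atTop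
  have hL : Tendsto L atTop atTop :=
    (tendsto_log_add_mul_log_log_atTop (2 * k - 1) ξ).comp tendsto_natCast_atTop_atTop
  have hnr := eventually_radius_pos_and_mul_sq_eq hL hr
  have hB := tendsto_mul_radius_sq hL hr
  have hJ := tendsto_intervalIntegral_one_add_div_pow_mul_exp_neg k one_half_pos
    (M := fun n : ℕ => (n : ℝ) * π * r n ^ 2 / 2)
    ((hB.atTop_mul_const (half_pos pi_pos)).congr fun n => by ring) hB
    (fun n => continuous_stripProfile _ _)
    (hnr.mono fun n h u hu => by linarith [half_le_stripProfile h.1 h.2.1 hu.1.le hu.2])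
    fun u hu => tendsto_stripProfile (hnr.mono fun _ h => h.1) (hnr.mono fun _ h => h.2.1) hB hu.le
  have hP := (hL_div.rpow_const (p := (k : ℝ) - 1 / 2) (Or.inl one_ne_zero)).const_mul
    (√π / (2 ^ (k + 1) * k !) * exp (-ξ / 2))
  rw [one_rpow, mul_one] at hP
  refine (hP.mul hJ |>.congr' ?_).trans (by rw [mul_one])
  filter_upwards [(tendsto_natCast_atTop_atTop (R := ℝ)).eventually_gt_atTop 1,
    hL.eventually_gt_atTop 0, hnr] with n hn hLn ⟨hn₀, hrn, _⟩
  rw [mul_integral_segArea_eq k hn₀ hrn,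
    one_div_two_mul_mul_pow_mul_exp_eq k ξ hn hLn rfl (hr n)]

/-- Lemma 4(1): with
r_n = √((log n + (2k−1) log log n + ξ)/(π n)), k ≥ 1, one has
n·∫₀^{r_n/2} (n·a(r_n,t))^k e^{−n·a(r_n,t)}/k! dt → (√π/(2^{k+1} k!))·e^{−ξ/2}. -/
theorem stmt_9 (k : ℕ) (hk : 1 ≤ k) (ξ : ℝ)
    (r : ℕ → ℝ)
    (hr : ∀ n : ℕ, r n =
      Real.sqrt ((Real.log n + (2 * k - 1) * Real.log (Real.log n) + ξ) / (π * n))) :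
    Tendsto (fun n : ℕ =>
        (n : ℝ) * ∫ t in (0:ℝ)..(r n / 2),
          ((n : ℝ) * segArea (r n) t) ^ k * Real.exp (-(n : ℝ) * segArea (r n) t)
            / (Nat.factorial k))
      atTop (nhds (Real.sqrt π / (2 ^ (k + 1) * Nat.factorial k) * Real.exp (-ξ / 2))) :=
  stmt_9_general k ξ r hr
end

section
/- Let Ω ⊂ ℝ² be a bounded convex region, C > 0 a constant with |B(x,r) ∩ Ω| ≥ C π r² for all x ∈ Ω, and suppose a measurable set A ⊂ Ω has |A| ≤ K·r² for a constant K. If r = r_n satisfies n π r_n² ∼ log n, then n·∫_A (n|B(x,r_n) ∩ Ω|)^k exp(−n|B(x,r_n) ∩ Ω|)/k! dx → 0 as n → ∞. -/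
open Real MeasureTheory Metric Filter Asymptotics

/-! With `a = n π r²`, the hypothesis on balls and the trivial bound `|B(x,r) ∩ Ω| ≤ π r²`
put `n |B(x,r) ∩ Ω|` in `[C a, a]`, so the integrand is at most `a^k e^{-C a} / k!`.
Multiplying by `n |A| ≤ n K r² = K a / π` bounds the whole expression by
`K a^{k+1} e^{-C a} / (π k!)`, which tends to `0` because `a ∼ log n → ∞`. -/

lemma volume_closedBall_inter_toReal_le (Ω : Set (EuclideanSpace ℝ (Fin 2)))
    (x : EuclideanSpace ℝ (Fin 2)) (ρ : ℝ) :
    (volume (closedBall x ρ ∩ Ω)).toReal ≤ π * ρ ^ 2 :=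
  calc (volume (closedBall x ρ ∩ Ω)).toReal ≤ (volume (closedBall x ρ)).toReal :=
        ENNReal.toReal_mono measure_closedBall_lt_top.ne (measure_mono Set.inter_subset_left)
    _ = π * max ρ 0 ^ 2 := by
        simp [ENNReal.toReal_ofReal', pi_pos.le, mul_comm]
    _ ≤ π * ρ ^ 2 := by
        rcases le_total ρ 0 with h | h
        · rw [max_eq_right h, zero_pow two_ne_zero, mul_zero]; positivity
        · rw [max_eq_left h]

lemma pow_mul_exp_neg_le_of_mem_Icc {c a t : ℝ} (k : ℕ) (hca : 0 ≤ c * a)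
    (ht : t ∈ Set.Icc (c * a) a) : t ^ k * exp (-t) ≤ a ^ k * exp (-(c * a)) :=
  have ⟨hlo, hhi⟩ := ht
  mul_le_mul (pow_le_pow_left₀ (hca.trans hlo) hhi k) (exp_le_exp.mpr (neg_le_neg hlo))
    (exp_pos _).le (pow_nonneg ((hca.trans hlo).trans hhi) k)

lemma tendsto_pow_mul_exp_neg_const_mul_atTop {c : ℝ} (hc : 0 < c) (k : ℕ) :
    Tendsto (fun t : ℝ => t ^ k * exp (-(c * t))) atTop (nhds 0) := by
  simpa [Real.rpow_natCast, neg_mul] using tendsto_rpow_mul_exp_neg_mul_atTop_nhds_zero k c hc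

lemma pow_mul_exp_neg_volume_closedBall_inter_le {Ω : Set (EuclideanSpace ℝ (Fin 2))}
    {x : EuclideanSpace ℝ (Fin 2)} {C ρ : ℝ} (hC : 0 < C)
    (hx : ENNReal.ofReal (C * π * ρ ^ 2) ≤ volume (closedBall x ρ ∩ Ω)) (k n : ℕ) :
    ((n : ℝ) * (volume (closedBall x ρ ∩ Ω)).toReal) ^ k *
        exp (-(n : ℝ) * (volume (closedBall x ρ ∩ Ω)).toReal) ≤
      (n * π * ρ ^ 2) ^ k * exp (-(C * (n * π * ρ ^ 2))) := by
  have hlo : C * π * ρ ^ 2 ≤ (volume (closedBall x ρ ∩ Ω)).toReal :=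
    (ENNReal.ofReal_le_iff_le_toReal (measure_ne_top_of_subset Set.inter_subset_left
      measure_closedBall_lt_top.ne)).mp hx
  have hhi := volume_closedBall_inter_toReal_le Ω x ρ
  rw [neg_mul]
  refine pow_mul_exp_neg_le_of_mem_Icc k (by positivity) ⟨?_, ?_⟩
  · calc C * (n * π * ρ ^ 2) = n * (C * π * ρ ^ 2) := by ring
      _ ≤ _ := by gcongr
  · calc _ ≤ (n : ℝ) * (π * ρ ^ 2) := by gcongr
      _ = _ := by ring

lemma natCast_mul_setIntegral_le {Ω A : Set (EuclideanSpace ℝ (Fin 2))}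
    (hbdd : Bornology.IsBounded Ω) {C K ρ : ℝ} (hC : 0 < C)
    (hball : ∀ x ∈ Ω, ENNReal.ofReal (C * π * ρ ^ 2) ≤ volume (closedBall x ρ ∩ Ω))
    (hA : A ⊆ Ω) (hAvol : (volume A).toReal ≤ K * ρ ^ 2) (k n : ℕ) :
    (n : ℝ) * ∫ x in A,
        ((n : ℝ) * (volume (closedBall x ρ ∩ Ω)).toReal) ^ k *
          exp (-(n : ℝ) * (volume (closedBall x ρ ∩ Ω)).toReal) / (Nat.factorial k) ≤
      K / (π * Nat.factorial k) *
        ((n * π * ρ ^ 2) ^ (k + 1) * exp (-(C * (n * π * ρ ^ 2)))) := by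
  set a : ℝ := n * π * ρ ^ 2
  have hAfin : volume A < ⊤ := (measure_mono hA).trans_lt hbdd.measure_lt_top
  calc _ ≤ (n : ℝ) * (a ^ k * exp (-(C * a)) / Nat.factorial k * volume.real A) := by
        gcongr
        refine (Real.le_norm_self _).trans
          (norm_setIntegral_le_of_norm_le_const hAfin fun x hx => ?_)
        rw [Real.norm_of_nonneg (by positivity)]
        gcongr ?_ / _
        exact pow_mul_exp_neg_volume_closedBall_inter_le hC (hball x (hA hx)) k n
    _ ≤ (n : ℝ) * (a ^ k * exp (-(C * a)) / Nat.factorial k * (K * ρ ^ 2)) := by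
        gcongr
        exact hAvol
    _ = _ := by
        simp only [a]
        field_simp
        ring

theorem stmt_15_general (Ω : Set (EuclideanSpace ℝ (Fin 2)))
    (hbdd : Bornology.IsBounded Ω)
    (C K : ℝ) (hC : 0 < C) (k : ℕ) (r : ℕ → ℝ)
    (hball : ∀ n : ℕ, ∀ x ∈ Ω,
      ENNReal.ofReal (C * π * r n ^ 2) ≤ volume (closedBall x (r n) ∩ Ω))
    (A : ℕ → Set (EuclideanSpace ℝ (Fin 2)))
    (hA : ∀ n, A n ⊆ Ω)
    (hAvol : ∀ n, (volume (A n)).toReal ≤ K * r n ^ 2)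
    (hsim : Tendsto (fun n : ℕ => (n : ℝ) * π * r n ^ 2 / Real.log n) atTop (nhds 1)) :
    Tendsto (fun n : ℕ =>
        (n : ℝ) * ∫ x in A n,
          ((n : ℝ) * (volume (closedBall x (r n) ∩ Ω)).toReal) ^ k *
            Real.exp (-(n : ℝ) * (volume (closedBall x (r n) ∩ Ω)).toReal) /
              (Nat.factorial k))
      atTop (nhds 0) := by
  have ha : Tendsto (fun n : ℕ => (n : ℝ) * π * r n ^ 2) atTop atTop :=
    (isEquivalent_of_tendsto_one hsim).symm.tendsto_atTop
      (tendsto_log_atTop.comp tendsto_natCast_atTop_atTop)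
  refine squeeze_zero (fun n => mul_nonneg n.cast_nonneg (integral_nonneg fun x => by positivity))
    (fun n => natCast_mul_setIntegral_le hbdd hC (hball n) (hA n) (hAvol n) k n) ?_
  simpa using ((tendsto_pow_mul_exp_neg_const_mul_atTop hC (k + 1)).comp ha).const_mul
    (K / (π * Nat.factorial k))

/-- generalizing Proposition 2: Let Ω ⊆ ℝ² be a bounded convex region,
C > 0 with |B(x,r_n) ∩ Ω| ≥ C π r_n² for all x ∈ Ω, and let A_n ⊆ Ω be measurable sets
with |A_n| ≤ K·r_n². If n π r_n² ∼ log n, then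
n·∫_{A_n} (n|B(x,r_n)∩Ω|)^k e^{−n|B(x,r_n)∩Ω|}/k! dx → 0. -/
theorem stmt_15 (Ω : Set (EuclideanSpace ℝ (Fin 2)))
    (hconv : Convex ℝ Ω) (hbdd : Bornology.IsBounded Ω)
    (C K : ℝ) (hC : 0 < C) (k : ℕ) (r : ℕ → ℝ) (hrpos : ∀ n, 0 < r n)
    (hball : ∀ n : ℕ, ∀ x ∈ Ω,
      ENNReal.ofReal (C * π * r n ^ 2) ≤ volume (closedBall x (r n) ∩ Ω))
    (A : ℕ → Set (EuclideanSpace ℝ (Fin 2)))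
    (hA : ∀ n, A n ⊆ Ω) (hAm : ∀ n, MeasurableSet (A n))
    (hAvol : ∀ n, (volume (A n)).toReal ≤ K * r n ^ 2)
    (hsim : Tendsto (fun n : ℕ => (n : ℝ) * π * r n ^ 2 / Real.log n) atTop (nhds 1)) :
    Tendsto (fun n : ℕ =>
        (n : ℝ) * ∫ x in A n,
          ((n : ℝ) * (volume (closedBall x (r n) ∩ Ω)).toReal) ^ k *
            Real.exp (-(n : ℝ) * (volume (closedBall x (r n) ∩ Ω)).toReal) /
              (Nat.factorial k))
      atTop (nhds 0) :=
  stmt_15_general Ω hbdd C K hC k r hball A hA hAvol hsim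
end
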